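/- arXiv:2201.12584 — 2 statements merged into one kernel-verified Lean document; each statement's English description precedes it below -/
import Mathlib

section
/- (Orientation equivariance of the simplicial complex filter bank.) Let B₁ be a real m×n matrix and B₂ be a real n×p matrix with B₁B₂ = 0, let H₀, H₁, H₂ be simplicial convolutional filters built from B₁, B₂ with coefficient sets (α_{0,l}, β_{0,l}), (α_{1,l}, β_{1,l}), (α_{2,l}, β_{2,l}), and for inputs x⁰ ∈ ℝᵐ, x¹ ∈ ℝⁿ, x² ∈ ℝᵖ define the filter-bank output y = H₀B₁ᵀx⁰ + H₁x¹ + H₂B₂x². Let D₀, D₁, D₂ be diagonal matrices of sizes m, n, p with diagonal entries in {+1, −1}, and define the reoriented incidence matrices B̃₁ = D₀B₁D₁, B̃₂ = D₁B₂D₂, the reoriented filters H̃ᵢ built from B̃₁, B̃₂ with the same coefficients, and the reoriented inputs x̃⁰ = D₀x⁰, x̃¹ = D₁x¹, x̃² = D₂x². Then the reoriented filter-bank output ỹ = H̃₀B̃₁ᵀx̃⁰ + H̃₁x̃¹ + H̃₂B̃₂x̃² satisfies ỹ = D₁y. -/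
open Matrix Finset

/-- A simplicial convolutional filter built from incidence matrices `B₁`, `B₂`:
`H = Σ_{l=0}^{L₁} α l • (B₁ᵀB₁)^l + Σ_{l=0}^{L₂} β l • (B₂B₂ᵀ)^l`. -/
noncomputable def scFilter {m n p : ℕ} (B₁ : Matrix (Fin m) (Fin n) ℝ)
    (B₂ : Matrix (Fin n) (Fin p) ℝ) (L₁ L₂ : ℕ) (α β : ℕ → ℝ) :
    Matrix (Fin n) (Fin n) ℝ :=
  (∑ l ∈ Finset.range (L₁ + 1), α l • (B₁ᵀ * B₁) ^ l)
    + ∑ l ∈ Finset.range (L₂ + 1), β l • (B₂ * B₂ᵀ) ^ l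

private lemma diag_sq {k : ℕ} (d : Fin k → ℝ) (hd : ∀ i, d i = 1 ∨ d i = -1) :
    Matrix.diagonal d * Matrix.diagonal d = 1 := by
  rw [Matrix.diagonal_mul_diagonal]
  have : (fun i => d i * d i) = fun _ => (1 : ℝ) := by
    funext i; rcases hd i with h | h <;> rw [h] <;> ring
  rw [this, Matrix.diagonal_one]

private lemma cancel_left {k k' : ℕ} (D : Matrix (Fin k) (Fin k) ℝ)
    (h : D * D = 1) (X : Matrix (Fin k) (Fin k') ℝ) :
    D * (D * X) = X := by
  rw [← Matrix.mul_assoc, h, Matrix.one_mul]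

private lemma sc_conj_pow {n : ℕ} (D M : Matrix (Fin n) (Fin n) ℝ) (hD : D * D = 1)
    (l : ℕ) : (D * M * D) ^ l = D * M ^ l * D := by
  induction l with
  | zero => simp [hD]
  | succ k ih =>
      rw [pow_succ, ih, pow_succ]
      simp only [Matrix.mul_assoc]
      rw [cancel_left D hD]

private lemma scFilter_conj {m n p : ℕ} (B₁ : Matrix (Fin m) (Fin n) ℝ)
    (B₂ : Matrix (Fin n) (Fin p) ℝ) (L₁ L₂ : ℕ) (α β : ℕ → ℝ)
    (d₀ : Fin m → ℝ) (d₁ : Fin n → ℝ) (d₂ : Fin p → ℝ)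
    (h₀ : Matrix.diagonal d₀ * Matrix.diagonal d₀ = 1)
    (h₁ : Matrix.diagonal d₁ * Matrix.diagonal d₁ = 1)
    (h₂ : Matrix.diagonal d₂ * Matrix.diagonal d₂ = 1) :
    scFilter (Matrix.diagonal d₀ * B₁ * Matrix.diagonal d₁)
        (Matrix.diagonal d₁ * B₂ * Matrix.diagonal d₂) L₁ L₂ α β =
      Matrix.diagonal d₁ * scFilter B₁ B₂ L₁ L₂ α β * Matrix.diagonal d₁ := by
  have e1 : (Matrix.diagonal d₀ * B₁ * Matrix.diagonal d₁)ᵀ *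
      (Matrix.diagonal d₀ * B₁ * Matrix.diagonal d₁) =
      Matrix.diagonal d₁ * (B₁ᵀ * B₁) * Matrix.diagonal d₁ := by
    simp only [Matrix.transpose_mul, Matrix.diagonal_transpose, Matrix.mul_assoc]
    rw [cancel_left _ h₀]
  have e2 : (Matrix.diagonal d₁ * B₂ * Matrix.diagonal d₂) *
      (Matrix.diagonal d₁ * B₂ * Matrix.diagonal d₂)ᵀ =
      Matrix.diagonal d₁ * (B₂ * B₂ᵀ) * Matrix.diagonal d₁ := by
    simp only [Matrix.transpose_mul, Matrix.diagonal_transpose, Matrix.mul_assoc]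
    rw [cancel_left _ h₂]
  unfold scFilter
  rw [e1, e2, Matrix.mul_add, Matrix.add_mul]
  congr 1 <;>
  · rw [Finset.mul_sum, Finset.sum_mul]
    refine Finset.sum_congr rfl fun l _ => ?_
    rw [sc_conj_pow _ _ h₁, Matrix.mul_smul, Matrix.smul_mul]

theorem filter_bank_orientation_equivariance
    {m n p : ℕ} (B₁ : Matrix (Fin m) (Fin n) ℝ) (B₂ : Matrix (Fin n) (Fin p) ℝ)
    (hB : B₁ * B₂ = 0) (L₁ L₂ : ℕ)
    (α₀ β₀ α₁ β₁ α₂ β₂ : ℕ → ℝ)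
    (x0 : Fin m → ℝ) (x1 : Fin n → ℝ) (x2 : Fin p → ℝ)
    (d₀ : Fin m → ℝ) (d₁ : Fin n → ℝ) (d₂ : Fin p → ℝ)
    (hd₀ : ∀ i, d₀ i = 1 ∨ d₀ i = -1)
    (hd₁ : ∀ i, d₁ i = 1 ∨ d₁ i = -1)
    (hd₂ : ∀ i, d₂ i = 1 ∨ d₂ i = -1) :
    (scFilter (Matrix.diagonal d₀ * B₁ * Matrix.diagonal d₁)
          (Matrix.diagonal d₁ * B₂ * Matrix.diagonal d₂) L₁ L₂ α₀ β₀).mulVec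
        ((Matrix.diagonal d₀ * B₁ * Matrix.diagonal d₁)ᵀ.mulVec
          ((Matrix.diagonal d₀).mulVec x0))
      + (scFilter (Matrix.diagonal d₀ * B₁ * Matrix.diagonal d₁)
          (Matrix.diagonal d₁ * B₂ * Matrix.diagonal d₂) L₁ L₂ α₁ β₁).mulVec
        ((Matrix.diagonal d₁).mulVec x1)
      + (scFilter (Matrix.diagonal d₀ * B₁ * Matrix.diagonal d₁)
          (Matrix.diagonal d₁ * B₂ * Matrix.diagonal d₂) L₁ L₂ α₂ β₂).mulVec
        ((Matrix.diagonal d₁ * B₂ * Matrix.diagonal d₂).mulVec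
          ((Matrix.diagonal d₂).mulVec x2)) =
    (Matrix.diagonal d₁).mulVec
      ((scFilter B₁ B₂ L₁ L₂ α₀ β₀).mulVec (B₁ᵀ.mulVec x0)
        + (scFilter B₁ B₂ L₁ L₂ α₁ β₁).mulVec x1
        + (scFilter B₁ B₂ L₁ L₂ α₂ β₂).mulVec (B₂.mulVec x2)) := by
  have h₀ := diag_sq d₀ hd₀
  have h₁ := diag_sq d₁ hd₁
  have h₂ := diag_sq d₂ hd₂
  rw [scFilter_conj B₁ B₂ L₁ L₂ α₀ β₀ d₀ d₁ d₂ h₀ h₁ h₂,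
      scFilter_conj B₁ B₂ L₁ L₂ α₁ β₁ d₀ d₁ d₂ h₀ h₁ h₂,
      scFilter_conj B₁ B₂ L₁ L₂ α₂ β₂ d₀ d₁ d₂ h₀ h₁ h₂]
  simp only [Matrix.mulVec_mulVec, Matrix.mulVec_add, Matrix.transpose_mul,
    Matrix.diagonal_transpose]
  congr 2
  · congr 1
    simp only [Matrix.mul_assoc]
    rw [cancel_left _ h₁, h₀, Matrix.mul_one]
  · congr 1
    simp only [Matrix.mul_assoc]
    rw [h₁, Matrix.mul_one]
  · simp only [Matrix.mul_assoc]
    rw [cancel_left _ h₁, h₂, Matrix.mul_one]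
end

section
/- Let B₁ be a real m×n matrix and B₂ be a real n×p matrix with B₁B₂ = 0, let L = B₁ᵀB₁ + B₂B₂ᵀ, let H₀, H₁, H₂ be simplicial convolutional filters built from B₁, B₂ with coefficient sets (α_{i,0},…,α_{i,L₁}; β_{i,0},…,β_{i,L₂}) for i = 0,1,2, and for inputs x⁰ ∈ ℝᵐ, x¹ ∈ ℝⁿ, x² ∈ ℝᵖ let y = H₀B₁ᵀx⁰ + H₁x¹ + H₂B₂x² be the filter-bank output. If v ∈ ℝⁿ is a gradient eigenvector, i.e. v = B₁ᵀw for some w ∈ ℝᵐ and Lv = λ·v, then vᵀy = (β_{0,0} + Σ_{l=0}^{L₁} α_{0,l} λ^l)·(vᵀB₁ᵀx⁰) + (β_{1,0} + Σ_{l=0}^{L₁} α_{1,l} λ^l)·(vᵀx¹); in particular the upper-adjacent signal x² does not contribute at gradient frequencies. -/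
/-!
A gradient vector `v = B₁ᵀw` lies in the kernel of `B₂ᵀ` because `B₂ᵀB₁ᵀ = (B₁B₂)ᵀ = 0`. Hence
`B₂B₂ᵀv = 0`, so `v` is a `λ`-eigenvector of `B₁ᵀB₁` and a `0`-eigenvector of `B₂B₂ᵀ`, and every
filter `H` acts on it by the scalar `β 0 + Σ α l λ^l`. Since `H` is symmetric,
`vᵀHx = (Hv)ᵀx` is that scalar times `vᵀx`, while `vᵀB₂x² = (B₂ᵀv)ᵀx² = 0`.
-/

open Matrix Finset

namespace Matrix

variable {R : Type*} [CommRing R] {m n : Type*}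

theorem dotProduct_mulVec_eq_transpose_mulVec_dotProduct [Fintype m] [Fintype n]
    (A : Matrix m n R) (v : m → R) (x : n → R) : v ⬝ᵥ A *ᵥ x = (Aᵀ *ᵥ v) ⬝ᵥ x := by
  rw [dotProduct_mulVec, mulVec_transpose]

theorem transpose_mulVec_transpose_mulVec_eq_zero {k : Type*} [Fintype k] [Fintype m]
    {A : Matrix k m R} {B : Matrix m n R} (h : A * B = 0) (w : k → R) : Bᵀ *ᵥ (Aᵀ *ᵥ w) = 0 := by
  rw [mulVec_mulVec, ← transpose_mul, h, transpose_zero, zero_mulVec]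

theorem pow_mulVec_of_mulVec_eq_smul [Fintype n] [DecidableEq n]
    {A : Matrix n n R} {v : n → R} {c : R} (h : A *ᵥ v = c • v) (l : ℕ) :
    (A ^ l) *ᵥ v = c ^ l • v := by
  induction l with
  | zero => simp
  | succ l ih =>
    rw [pow_succ, ← mulVec_mulVec, h, mulVec_smul, ih, smul_smul, pow_succ']

theorem sum_smul_pow_mulVec_of_mulVec_eq_smul [Fintype n] [DecidableEq n]
    {A : Matrix n n R} {v : n → R} {c : R} (h : A *ᵥ v = c • v) (s : Finset ℕ) (a : ℕ → R) :
    (∑ l ∈ s, a l • A ^ l) *ᵥ v = (∑ l ∈ s, a l * c ^ l) • v := by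
  simp only [sum_mulVec, smul_mulVec, pow_mulVec_of_mulVec_eq_smul h, smul_smul, sum_smul]

theorem dotProduct_mulVec_of_transpose_mulVec_eq_smul [Fintype n]
    {A : Matrix n n R} {v : n → R} {c : R} (h : Aᵀ *ᵥ v = c • v) (x : n → R) :
    v ⬝ᵥ A *ᵥ x = c * (v ⬝ᵥ x) := by
  rw [dotProduct_mulVec_eq_transpose_mulVec_dotProduct, h, smul_dotProduct, smul_eq_mul]

end Matrix

section scFilter

variable {m n p : ℕ} (B₁ : Matrix (Fin m) (Fin n) ℝ) (B₂ : Matrix (Fin n) (Fin p) ℝ)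
  (L₁ L₂ : ℕ) (α β : ℕ → ℝ)

theorem scFilter_transpose : (scFilter B₁ B₂ L₁ L₂ α β)ᵀ = scFilter B₁ B₂ L₁ L₂ α β := by
  simp only [scFilter, transpose_add, transpose_sum, transpose_smul, transpose_pow,
    transpose_mul, transpose_transpose]

theorem scFilter_mulVec_of_eigenvector {v : Fin n → ℝ} {lam : ℝ}
    (hlow : (B₁ᵀ * B₁) *ᵥ v = lam • v) (hup : (B₂ * B₂ᵀ) *ᵥ v = 0) :
    scFilter B₁ B₂ L₁ L₂ α β *ᵥ v
      = (β 0 + ∑ l ∈ range (L₁ + 1), α l * lam ^ l) • v := by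
  have hup' : (B₂ * B₂ᵀ) *ᵥ v = (0 : ℝ) • v := by rw [hup, zero_smul]
  rw [scFilter, add_mulVec, sum_smul_pow_mulVec_of_mulVec_eq_smul hlow,
    sum_smul_pow_mulVec_of_mulVec_eq_smul hup', add_smul, add_comm]
  congr 2
  simp [sum_range_succ']

end scFilter

theorem filter_bank_gradient_response
    {m n p : ℕ} (B₁ : Matrix (Fin m) (Fin n) ℝ) (B₂ : Matrix (Fin n) (Fin p) ℝ)
    (hB : B₁ * B₂ = 0) (L₁ L₂ : ℕ)
    (α₀ β₀ α₁ β₁ α₂ β₂ : ℕ → ℝ)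
    (x0 : Fin m → ℝ) (x1 : Fin n → ℝ) (x2 : Fin p → ℝ)
    (v : Fin n → ℝ) (w : Fin m → ℝ) (hv : v = B₁ᵀ.mulVec w) (lam : ℝ)
    (heig : (B₁ᵀ * B₁ + B₂ * B₂ᵀ).mulVec v = lam • v) :
    v ⬝ᵥ ((scFilter B₁ B₂ L₁ L₂ α₀ β₀).mulVec (B₁ᵀ.mulVec x0)
        + (scFilter B₁ B₂ L₁ L₂ α₁ β₁).mulVec x1
        + (scFilter B₁ B₂ L₁ L₂ α₂ β₂).mulVec (B₂.mulVec x2)) =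
      (β₀ 0 + ∑ l ∈ Finset.range (L₁ + 1), α₀ l * lam ^ l) * (v ⬝ᵥ B₁ᵀ.mulVec x0)
        + (β₁ 0 + ∑ l ∈ Finset.range (L₁ + 1), α₁ l * lam ^ l) * (v ⬝ᵥ x1) := by
  have hcurl : B₂ᵀ *ᵥ v = 0 := hv ▸ transpose_mulVec_transpose_mulVec_eq_zero hB w
  have hup : (B₂ * B₂ᵀ) *ᵥ v = 0 := by rw [← mulVec_mulVec, hcurl, mulVec_zero]
  have hlow : (B₁ᵀ * B₁) *ᵥ v = lam • v := by rwa [add_mulVec, hup, add_zero] at heig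
  have hresponse (α β : ℕ → ℝ) (x : Fin n → ℝ) :
      v ⬝ᵥ scFilter B₁ B₂ L₁ L₂ α β *ᵥ x
        = (β 0 + ∑ l ∈ range (L₁ + 1), α l * lam ^ l) * (v ⬝ᵥ x) :=
    dotProduct_mulVec_of_transpose_mulVec_eq_smul
      (by rw [scFilter_transpose, scFilter_mulVec_of_eigenvector B₁ B₂ L₁ L₂ α β hlow hup]) x
  have hx2 : v ⬝ᵥ B₂ *ᵥ x2 = 0 := by
    rw [dotProduct_mulVec_eq_transpose_mulVec_dotProduct, hcurl, zero_dotProduct]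
  rw [dotProduct_add, dotProduct_add, hresponse, hresponse, hresponse, hx2, mul_zero, add_zero]
end
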